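/- arXiv:1303.0452 — 2 statements merged into one kernel-verified Lean document; each statement's English description precedes it below -/
import Mathlib

section
/- For all x ∈ [−1.2, 1.2], |cos x − (1 − 0.5x² + 0.0416525x⁴ − 0.00134386x⁶)| ≤ 0.0000336·x². -/
/-!
The Maclaurin series of `cos x` is alternating, and for `x ^ 2 ≤ 2` the moduli `x ^ (2n) / (2n)!`
of its terms decrease, so its partial sums alternately overshoot and undershoot `cos x`. The
partial sums with five and six terms therefore bracket `cos x` to within `x ^ 10 / 10!`, and on
`[-1.2, 1.2]` that bracket lies inside the claimed band around the interpolation polynomial,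
a polynomial inequality in `x ^ 2`.
-/

open Finset Filter Topology Nat

namespace Real

noncomputable def cosTaylor (n : ℕ) (x : ℝ) : ℝ :=
  ∑ i ∈ range n, (-1) ^ i * (x ^ (2 * i) / (2 * i)!)

theorem antitone_pow_two_mul_div_factorial {x : ℝ} (hx : x ^ 2 ≤ 2) :
    Antitone fun n : ℕ ↦ x ^ (2 * n) / (2 * n)! := by
  refine antitone_nat_of_succ_le fun n ↦ ?_
  have hfac : ((2 * (n + 1))! : ℝ) = (2 * n)! * ((2 * n + 1) * (2 * n + 2)) := by
    rw [show 2 * (n + 1) = 2 * n + 1 + 1 by ring, factorial_succ, factorial_succ]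
    push_cast
    ring
  have hpos : (0 : ℝ) < (2 * n)! := mod_cast factorial_pos _
  have hratio : x ^ 2 ≤ (2 * n + 1) * (2 * n + 2) := by
    nlinarith [(n.cast_nonneg : (0 : ℝ) ≤ n)]
  have hterm : 0 ≤ x ^ (2 * n) / (2 * n)! := div_nonneg (by rw [pow_mul]; positivity) hpos.le
  rw [hfac, show x ^ (2 * (n + 1)) = x ^ (2 * n) * x ^ 2 by ring, mul_div_mul_comm]
  exact mul_le_of_le_one_right hterm ((div_le_one (by positivity)).2 hratio)

theorem tendsto_cosTaylor (x : ℝ) : Tendsto (cosTaylor · x) atTop (𝓝 (cos x)) := by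
  simpa only [cosTaylor, mul_div_assoc] using (hasSum_cos x).tendsto_sum_nat

theorem cosTaylor_two_mul_le_cos {x : ℝ} (hx : x ^ 2 ≤ 2) (k : ℕ) :
    cosTaylor (2 * k) x ≤ cos x :=
  (antitone_pow_two_mul_div_factorial hx).alternating_series_le_tendsto (tendsto_cosTaylor x) k

theorem cos_le_cosTaylor_two_mul_add_one {x : ℝ} (hx : x ^ 2 ≤ 2) (k : ℕ) :
    cos x ≤ cosTaylor (2 * k + 1) x :=
  (antitone_pow_two_mul_div_factorial hx).tendsto_le_alternating_series (tendsto_cosTaylor x) k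

theorem cosTaylor_five (x : ℝ) :
    cosTaylor 5 x = 1 - x ^ 2 / 2 + x ^ 4 / 24 - x ^ 6 / 720 + x ^ 8 / 40320 := by
  norm_num [cosTaylor, sum_range_succ, factorial]
  ring

theorem cosTaylor_six (x : ℝ) :
    cosTaylor 6 x =
      1 - x ^ 2 / 2 + x ^ 4 / 24 - x ^ 6 / 720 + x ^ 8 / 40320 - x ^ 10 / 3628800 := by
  norm_num [cosTaylor, sum_range_succ, factorial]
  ring

end Real

open Real

/-- Certified degree-6 polynomial approximation of `cos` on `[-1.2, 1.2]` with
error bound `0.0000336 * x²`. -/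
theorem stmt12 : ∀ x : ℝ, -1.2 ≤ x → x ≤ 1.2 →
    |Real.cos x - (1 - 0.5 * x ^ 2 + 0.0416525 * x ^ 4 - 0.00134386 * x ^ 6)|
      ≤ 0.0000336 * x ^ 2 := by
  intro x hx₁ hx₂
  have hsq : x ^ 2 ≤ 1.44 := by nlinarith
  have hlo := cosTaylor_six x ▸ cosTaylor_two_mul_le_cos (x := x) (by linarith) 3
  have hhi := cosTaylor_five x ▸ cos_le_cosTaylor_two_mul_add_one (x := x) (by linarith) 2
  have hsq₀ := sq_nonneg x
  rw [abs_le]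
  constructor <;> nlinarith [mul_nonneg hsq₀ hsq₀, mul_nonneg (mul_nonneg hsq₀ hsq₀) hsq₀]
end

section
/- For all x ∈ [−0.84, 0.84], |sin x − (x − 0.16666643x³ + 0.008331760x⁵ − 0.00019471928x⁷)| ≤ 10⁻⁷·|x|. -/
/-!
Split the error at the degree-9 Taylor polynomial of `sin`. Its tail after the `x⁹` term is
dominated by the geometric series `|x|¹¹/11! · ∑ (x²)ᵏ`, which is below `2·10⁻⁸·|x|` for
`|x| ≤ 0.84`. The difference between the Taylor polynomial and the given polynomial is
`x · q(x²)` with `q` a quartic that stays within `8·10⁻⁸` on `[0, 0.84²]`.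
-/

open Finset
open scoped Nat

theorem Real.abs_sin_sub_sum_range_le (n : ℕ) {x : ℝ} (hx : x ^ 2 < 1) :
    |Real.sin x - ∑ i ∈ range n, (-1) ^ i * x ^ (2 * i + 1) / (2 * i + 1)!| ≤
      |x| ^ (2 * n + 1) / (2 * n + 1)! / (1 - x ^ 2) := by
  set c := |x| ^ (2 * n + 1) / (2 * n + 1)!
  have htail := (hasSum_nat_add_iff' n).mpr (Real.hasSum_sin x)
  have hgeom : HasSum (fun k : ℕ => c * (x ^ 2) ^ k) (c * (1 - x ^ 2)⁻¹) :=
    (hasSum_geometric_of_lt_one (sq_nonneg x) hx).mul_left c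
  have hterm : ∀ k : ℕ, ‖(-1) ^ (k + n) * x ^ (2 * (k + n) + 1) / (2 * (k + n) + 1)!‖ ≤
      c * (x ^ 2) ^ k := by
    intro k
    have hfact : ((2 * n + 1)! : ℝ) ≤ (2 * (k + n) + 1)! := by
      exact_mod_cast Nat.factorial_le (by omega)
    have hpow : |x| ^ (2 * (k + n) + 1) = |x| ^ (2 * n + 1) * (x ^ 2) ^ k := by
      rw [← sq_abs, ← pow_mul, ← pow_add]; ring_nf
    rw [Real.norm_eq_abs, abs_div, abs_mul, abs_pow, abs_neg, abs_one, one_pow, one_mul,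
      abs_pow, Nat.abs_cast, hpow, mul_div_right_comm]
    gcongr
    exact div_le_div_of_nonneg_left (by positivity) (by positivity) hfact
  simpa [div_eq_mul_inv] using htail.norm_le_of_bounded hgeom hterm

lemma abs_sin_sub_taylor9_le {x : ℝ} (hx : x ^ 2 ≤ 0.7056) :
    |Real.sin x - (x - x ^ 3 / 6 + x ^ 5 / 120 - x ^ 7 / 5040 + x ^ 9 / 362880)| ≤
      2e-8 * |x| := by
  have htail := Real.abs_sin_sub_sum_range_le 5 (x := x) (by linarith)
  have hsum : ∑ i ∈ range 5, (-1) ^ i * x ^ (2 * i + 1) / (2 * i + 1)! =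
      x - x ^ 3 / 6 + x ^ 5 / 120 - x ^ 7 / 5040 + x ^ 9 / 362880 := by
    simp only [sum_range_succ, sum_range_zero, Nat.factorial]
    norm_num
    ring
  have hpow : |x| ^ 11 ≤ |x| * 0.7056 ^ 5 := by
    calc |x| ^ 11 = |x| * (|x| ^ 2) ^ 5 := by ring
      _ ≤ |x| * 0.7056 ^ 5 := by rw [sq_abs]; gcongr
  rw [hsum] at htail
  refine htail.trans ?_
  norm_num [Nat.factorial]
  rw [div_div, div_le_iff₀ (by nlinarith)]
  nlinarith [abs_nonneg x]

lemma abs_taylor9_sub_approx_le {x : ℝ} (hx : x ^ 2 ≤ 0.7056) :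
    |(x - x ^ 3 / 6 + x ^ 5 / 120 - x ^ 7 / 5040 + x ^ 9 / 362880) -
        (x - 0.16666643 * x ^ 3 + 0.008331760 * x ^ 5 - 0.00019471928 * x ^ 7)| ≤
      8e-8 * |x| := by
  set y := x ^ 2 with hy
  have hy0 : 0 ≤ y := sq_nonneg x
  have hfactor : (x - x ^ 3 / 6 + x ^ 5 / 120 - x ^ 7 / 5040 + x ^ 9 / 362880) -
      (x - 0.16666643 * x ^ 3 + 0.008331760 * x ^ 5 - 0.00019471928 * x ^ 7) =
      x * ((0.16666643 - 1 / 6) * y + (1 / 120 - 0.008331760) * y ^ 2 +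
        (0.00019471928 - 1 / 5040) * y ^ 3 + y ^ 4 / 362880) := by
    rw [hy]; ring
  rw [hfactor, abs_mul, mul_comm]
  gcongr
  rw [abs_le]
  constructor
  · nlinarith [sq_nonneg (y - 0.3), sq_nonneg (y - 0.7), mul_nonneg hy0 hy0,
      mul_nonneg (mul_nonneg hy0 hy0) hy0, sq_nonneg (y * (y - 0.5))]
  · nlinarith [sq_nonneg (y - 0.3), mul_nonneg hy0 hy0,
      mul_nonneg (mul_nonneg hy0 hy0) hy0, sq_nonneg (y * (y - 0.5))]

/-- Certified degree-7 odd polynomial approximation of `sin` on `[-0.84, 0.84]`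
with error bound `10⁻⁷ * |x|`. -/
theorem stmt13 : ∀ x : ℝ, -0.84 ≤ x → x ≤ 0.84 →
    |Real.sin x - (x - 0.16666643 * x ^ 3 + 0.008331760 * x ^ 5
        - 0.00019471928 * x ^ 7)| ≤ 1e-7 * |x| := by
  intro x hxl hxu
  have hx : x ^ 2 ≤ 0.7056 := by nlinarith
  calc _ ≤ _ := abs_sub_le _ (x - x ^ 3 / 6 + x ^ 5 / 120 - x ^ 7 / 5040 + x ^ 9 / 362880) _
    _ ≤ 2e-8 * |x| + 8e-8 * |x| :=
      add_le_add (abs_sin_sub_taylor9_le hx) (abs_taylor9_sub_approx_le hx)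
    _ = 1e-7 * |x| := by ring
end
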